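/- arXiv:math/0409323 — 4 statements merged into one kernel-verified Lean document; each statement's English description precedes it below -/
import Mathlib

section
/- For every integer k ≥ 2 and positive integer n, the number of k-ary trees on [n] equals n! · (1/((k−1)n+1)) · binom(kn, n) = kn·(kn−1)⋯(kn−n+2). -/
/-!
A `k`-ary tree is determined by its preorder code (`true` for a vertex, `false` for an empty
subtree) together with its preorder list of labels. The codes are the Łukasiewicz words: reading
`true` as a step `k - 1` and `false` as a step `-1`, the path stays nonnegative until its last
step, where it reaches `-1`; a tree with `n` vertices has a code of length `kn + 1`.
By the cycle lemma, each of the `C(kn + 1, n)` words of length `kn + 1` with `n` letters `true`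
has exactly one rotation that is a code, so rotating the codes by `0, …, kn` yields every such
word exactly once. Hence there are `C(kn + 1, n) / (kn + 1)` codes, and labelling the vertices
by `[n]` in preorder gives the factor `n!`.
-/

/-- Labeled `k`-ary trees: each vertex has a label and `k` ordered (possibly empty)
subtrees, the subtree rooted at its `i`-th child. -/
inductive KT (k : ℕ) : Type
  | nil : KT k
  | node (label : ℕ) (children : Fin k → KT k) : KT k

/-- The multiset of labels of a `k`-ary tree. -/
def KT.labels {k : ℕ} : KT k → Multiset ℕ
  | .nil => 0
  | .node a c => a ::ₘ ∑ i : Fin k, (c i).labels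

/-- The number of *proper* vertices of a `k`-ary tree: a vertex is proper if its label
is the smallest label in its descendant subtree (including itself). -/
def KT.pv {k : ℕ} : KT k → ℕ
  | .nil => 0
  | .node a c =>
      (if ∀ i : Fin k, ∀ b ∈ (c i).labels, a ≤ b then 1 else 0) + ∑ i : Fin k, (c i).pv

/-- `𝒜ᵏ_n`: the `k`-ary trees on `[n] = {1,…,n}`. -/
def KTn (k n : ℕ) : Type := {T : KT k // T.labels = (Finset.Icc 1 n).val}

lemma List.exists_ofFn_eq {α : Type*} {n : ℕ} {l : List α} (h : l.length = n) :
    ∃ f : Fin n → α, List.ofFn f = l := by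
  subst h; exact ⟨l.get, List.ofFn_get l⟩

open Nat in
lemma Finset.card_lists_coe_eq_val {α : Type*} (s : Finset α) :
    Nat.card {l : List α // (l : Multiset α) = s.val} = s.card ! := by
  let perms : Finset (List α) := ⟨Multiset.lists s.val, Multiset.lists_nodup_finset s⟩
  have hmem : ∀ l : List α, (l : Multiset α) = s.val ↔ l ∈ perms := fun l => by
    simp [perms, eq_comm]
  rw [Nat.card_congr (Equiv.subtypeEquivRight hmem), Nat.card_eq_fintype_card,
    Fintype.card_coe]
  change Multiset.card (Multiset.lists s.val) = _
  rw [← s.coe_toList, Multiset.lists_coe, Multiset.coe_card, List.length_permutations,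
    s.length_toList]

open Finset in
lemma List.count_true_ofFn {L : ℕ} (v : Fin L → Bool) :
    (List.ofFn v).count true = #{i | v i = true} := by
  rw [← Multiset.coe_count, ← Fin.univ_val_map, Multiset.count_map, Finset.card_def,
    Finset.filter_val]
  congr 2
  ext
  exact eq_comm

lemma card_boolLists_eq_choose (L n : ℕ) :
    Nat.card {w : List Bool // w.length = L ∧ w.count true = n} = L.choose n := by
  let f : {s : Finset (Fin L) // s.card = n} →
      {w : List Bool // w.length = L ∧ w.count true = n} := fun s =>
    ⟨List.ofFn fun i => decide (i ∈ s.1), by simp, by simp [List.count_true_ofFn, s.2]⟩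
  have hf : Function.Bijective f := by
    refine ⟨fun s t hst => ?_, fun ⟨w, hw, hc⟩ => ?_⟩
    · have := congrFun (List.ofFn_injective (congrArg Subtype.val hst))
      exact Subtype.ext (Finset.ext fun i => by simpa using this i)
    · obtain ⟨v, rfl⟩ := List.exists_ofFn_eq hw
      exact ⟨⟨({i | v i = true} : Finset (Fin L)), by rw [← hc, List.count_true_ofFn]⟩,
        by simp [f]⟩
  rw [← Nat.card_congr (Equiv.ofBijective f hf), Nat.card_eq_fintype_card,
    Fintype.card_finset_len, Fintype.card_fin]

/-- The height reached by the path that steps by `k - 1` on `true` and by `-1` on `false`. -/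
def wordHeight (k : ℕ) (w : List Bool) : ℤ := k * w.count true - w.length

/-- The preorder codes of forests of `m` trees: the path stays above `-m` until it ends there. -/
def IsForestWord (k m : ℕ) (w : List Bool) : Prop :=
  wordHeight k w = -m ∧ ∀ j < w.length, -(m : ℤ) < wordHeight k (w.take j)

section Words

variable {k m : ℕ}

@[simp] lemma wordHeight_nil : wordHeight k [] = 0 := by simp [wordHeight]

@[simp] lemma wordHeight_cons_true (w : List Bool) :
    wordHeight k (true :: w) = k - 1 + wordHeight k w := by
  simp only [wordHeight, List.count_cons_self, List.length_cons]; push_cast; ring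

@[simp] lemma wordHeight_cons_false (w : List Bool) :
    wordHeight k (false :: w) = -1 + wordHeight k w := by
  simp [wordHeight]; ring

lemma wordHeight_append (u v : List Bool) :
    wordHeight k (u ++ v) = wordHeight k u + wordHeight k v := by
  simp only [wordHeight, List.count_append, List.length_append]; push_cast; ring

lemma List.Perm.wordHeight_eq {u v : List Bool} (h : u.Perm v) :
    wordHeight k u = wordHeight k v := by
  rw [wordHeight, wordHeight, h.count_eq, h.length_eq]

lemma wordHeight_take_succ_ge (w : List Bool) (j : ℕ) :
    wordHeight k (w.take j) - 1 ≤ wordHeight k (w.take (j + 1)) := by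
  have hc : (w.take j).count true ≤ (w.take (j + 1)).count true :=
    (List.take_sublist_take_left (by omega)).count_le _
  have hl : (w.take (j + 1)).length ≤ (w.take j).length + 1 := by
    simp only [List.length_take]; omega
  have : (k : ℤ) * (w.take j).count true ≤ k * (w.take (j + 1)).count true := by gcongr
  simp only [wordHeight]; omega

lemma IsForestWord.length_eq {w : List Bool} (h : IsForestWord k m w) :
    w.length = k * w.count true + m := by
  have := h.1; simp only [wordHeight] at this; omega

lemma isForestWord_zero_iff {w : List Bool} : IsForestWord k 0 w ↔ w = [] := by
  refine ⟨fun h => ?_, by rintro rfl; simp [IsForestWord]⟩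
  rw [← List.length_eq_zero_iff]
  by_contra hw
  simpa using h.2 0 (by omega)

lemma IsForestWord.append {u v : List Bool} (hu : IsForestWord k 1 u) (hv : IsForestWord k m v) :
    IsForestWord k (m + 1) (u ++ v) := by
  refine ⟨by rw [wordHeight_append, hu.1, hv.1]; push_cast; ring, fun j hj => ?_⟩
  rw [List.take_append, wordHeight_append]
  rcases lt_or_ge j u.length with h | h
  · have := hu.2 j h
    rw [Nat.sub_eq_zero_of_le h.le, List.take_zero, wordHeight_nil]; push_cast; omega
  · have := hv.2 (j - u.length) (by simp at hj; omega)
    rw [List.take_of_length_le h, hu.1]; push_cast; omega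

lemma isForestWord_flatten {ls : List (List Bool)} (h : ∀ u ∈ ls, IsForestWord k 1 u) :
    IsForestWord k ls.length ls.flatten := by
  induction ls with
  | nil => exact isForestWord_zero_iff.2 rfl
  | cons u ls ih => exact (h u (by simp)).append (ih fun v hv => h v (by simp [hv]))

lemma isForestWord_one_cons_true {w : List Bool} :
    IsForestWord k 1 (true :: w) ↔ IsForestWord k k w := by
  simp only [IsForestWord, wordHeight_cons_true, List.length_cons]
  constructor
  · rintro ⟨h, hpre⟩
    refine ⟨by omega, fun j hj => ?_⟩
    have := hpre (j + 1) (by omega)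
    simp only [List.take_succ_cons, wordHeight_cons_true] at this
    omega
  · rintro ⟨h, hpre⟩
    refine ⟨by push_cast; omega, fun j hj => ?_⟩
    cases j with
    | zero => simp
    | succ j =>
      have := hpre j (by omega)
      simp only [List.take_succ_cons, wordHeight_cons_true]
      omega

lemma isForestWord_one_cons_false {w : List Bool} :
    IsForestWord k 1 (false :: w) ↔ w = [] := by
  refine ⟨fun h => ?_, by rintro rfl; simp [IsForestWord]⟩
  rw [← List.length_eq_zero_iff]
  by_contra hw
  simpa using h.2 1 (by simp; omega)

lemma IsForestWord.eq_nil_of_append {u t : List Bool} (h : IsForestWord k 1 (u ++ t))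
    (hu : IsForestWord k 1 u) : t = [] := by
  rw [← List.length_eq_zero_iff]
  by_contra ht
  have := h.2 u.length (by simp; omega)
  rw [List.take_left, hu.1] at this
  simp at this

lemma IsForestWord.eq_of_append_eq {u u' r r' : List Bool} (hu : IsForestWord k 1 u)
    (hu' : IsForestWord k 1 u') (h : u ++ r = u' ++ r') : u = u' := by
  rcases List.append_eq_append_iff.1 h with ⟨t, rfl, -⟩ | ⟨t, rfl, -⟩
  · simp [hu'.eq_nil_of_append hu]
  · simp [hu.eq_nil_of_append hu']

lemma eq_of_flatten_eq_of_isForestWord {ls ls' : List (List Bool)} (hl : ls.length = ls'.length)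
    (h : ∀ u ∈ ls, IsForestWord k 1 u) (h' : ∀ u ∈ ls', IsForestWord k 1 u)
    (hf : ls.flatten = ls'.flatten) : ls = ls' := by
  induction ls generalizing ls' with
  | nil => simpa [eq_comm] using hl
  | cons u ls ih =>
    obtain _ | ⟨u', ls'⟩ := ls'
    · simp at hl
    simp only [List.flatten_cons] at hf
    have hu : u = u' := (h u (by simp)).eq_of_append_eq (h' u' (by simp)) hf
    subst hu
    simpa using ih (by simpa using hl) (fun v hv => h v (by simp [hv]))
      (fun v hv => h' v (by simp [hv])) (List.append_cancel_left hf)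

-- The first tree ends where the path first reaches `-1`: it cannot skip that value, since
-- it only ever descends by `1`.
lemma IsForestWord.exists_append {w : List Bool} (h : IsForestWord k (m + 1) w) :
    ∃ u v, w = u ++ v ∧ IsForestWord k 1 u ∧ IsForestWord k m v := by
  have hex : ∃ j, wordHeight k (w.take j) ≤ -1 :=
    ⟨w.length, by rw [List.take_length, h.1]; omega⟩
  obtain ⟨j, hjneg, hpre⟩ :
      ∃ j, wordHeight k (w.take j) ≤ -1 ∧ ∀ i < j, 0 ≤ wordHeight k (w.take i) :=
    ⟨Nat.find hex, Nat.find_spec hex, fun i hi => by have := Nat.find_min hex hi; omega⟩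
  have hj : wordHeight k (w.take j) = -1 := by
    obtain ⟨i, rfl⟩ : ∃ i, j = i + 1 :=
      Nat.exists_eq_succ_of_ne_zero fun h0 => by simp [h0] at hjneg
    have := wordHeight_take_succ_ge (k := k) w i
    have := hpre i (by omega)
    omega
  have hjw : j ≤ w.length := by
    by_contra hjw
    have := hpre w.length (by omega)
    rw [List.take_length, h.1] at this; omega
  have hdrop : ∀ i, wordHeight k (w.take (j + i)) = -1 + wordHeight k ((w.drop j).take i) := by
    intro i; rw [List.take_add, wordHeight_append, hj]
  refine ⟨w.take j, w.drop j, (List.take_append_drop j w).symm, ⟨hj, fun i hi => ?_⟩,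
    ⟨?_, ?_⟩⟩
  · rw [List.take_take, min_eq_left (by simp at hi; omega)]
    have := hpre i (by simp at hi; omega); omega
  · have := hdrop (w.length - j)
    rw [Nat.add_sub_cancel' hjw, List.take_length, h.1, List.take_of_length_le (by simp)] at this
    push_cast at this; omega
  · intro i hi
    have := h.2 (j + i) (by simp at hi; omega)
    rw [hdrop] at this; push_cast at this; omega

end Words

section CycleLemma
variable {k : ℕ}

lemma wordHeight_take_rotate_of_add_le {w : List Bool} {i j : ℕ} (h : i + j ≤ w.length) :
    wordHeight k ((w.rotate i).take j) =
      wordHeight k (w.take (i + j)) - wordHeight k (w.take i) := by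
  rw [List.rotate_eq_drop_append_take (by omega), List.take_append_of_le_length (by simp; omega),
    List.take_add, wordHeight_append]
  ring

lemma wordHeight_take_rotate_sub_add {w : List Bool} {i j : ℕ} (hi : i ≤ w.length)
    (hj : j ≤ i) :
    wordHeight k ((w.rotate i).take (w.length - i + j)) =
      wordHeight k w - wordHeight k (w.take i) + wordHeight k (w.take j) := by
  have hsplit := wordHeight_append (k := k) (w.take i) (w.drop i)
  rw [List.take_append_drop] at hsplit
  rw [List.rotate_eq_drop_append_take hi, ← List.length_drop, List.take_length_add_append,
    wordHeight_append, List.take_take, min_eq_left hj]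
  omega

variable {w : List Bool}

lemma isForestWord_rotate_iff (hw : wordHeight k w = -1) {i : ℕ} (hi : i < w.length) :
    IsForestWord k 1 (w.rotate i) ↔
      (∀ j < i, wordHeight k (w.take i) < wordHeight k (w.take j)) ∧
        ∀ j, i ≤ j → j < w.length →
          wordHeight k (w.take i) ≤ wordHeight k (w.take j) := by
  have hrot : wordHeight k (w.rotate i) = -1 := ((w.rotate_perm i).wordHeight_eq).trans hw
  simp only [IsForestWord, Nat.cast_one, hrot, List.length_rotate, true_and]
  constructor
  · intro h
    refine ⟨fun j hj => ?_, fun j hij hj => ?_⟩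
    · have := h (w.length - i + j) (by omega)
      rw [wordHeight_take_rotate_sub_add hi.le hj.le, hw] at this
      omega
    · have := h (j - i) (by omega)
      rw [wordHeight_take_rotate_of_add_le (by omega), Nat.add_sub_cancel' hij] at this
      omega
  · rintro ⟨hlt, hle⟩ j hj
    by_cases hij : i + j < w.length
    · rw [wordHeight_take_rotate_of_add_le hij.le]
      have := hle (i + j) (by omega) hij
      omega
    · obtain ⟨j', rfl⟩ : ∃ j', j = w.length - i + j' := ⟨j - (w.length - i), by omega⟩
      rw [wordHeight_take_rotate_sub_add hi.le (by omega), hw]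
      have := hlt j' (by omega)
      omega

/-- The cycle lemma of Dvoretzky and Motzkin. -/
theorem existsUnique_isForestWord_rotate (hw : wordHeight k w = -1) :
    ∃! i, i < w.length ∧ IsForestWord k 1 (w.rotate i) := by
  have hlen : 0 < w.length := List.length_pos_iff.2 fun h => by simp [h] at hw
  obtain ⟨j₀, hj₀, hmin⟩ := (Finset.range w.length).exists_min_image
    (fun j => wordHeight k (w.take j)) ⟨0, by simpa using hlen⟩
  have hex : ∃ i, i < w.length ∧ wordHeight k (w.take i) = wordHeight k (w.take j₀) :=
    ⟨j₀, by simpa using hj₀, rfl⟩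
  obtain ⟨hilt, hival⟩ := Nat.find_spec hex
  have hgood : IsForestWord k 1 (w.rotate (Nat.find hex)) := by
    rw [isForestWord_rotate_iff hw hilt, hival]
    refine ⟨fun j hj => ?_, fun j _ hj => hmin j (by simpa using hj)⟩
    have := hmin j (by simp; omega)
    have := Nat.find_min hex hj
    omega
  refine ⟨Nat.find hex, ⟨hilt, hgood⟩, fun i ⟨hi, hibal⟩ => ?_⟩
  rw [isForestWord_rotate_iff hw hi] at hibal
  rw [isForestWord_rotate_iff hw hilt] at hgood
  by_contra hne
  rcases Nat.lt_or_gt_of_ne hne with h | h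
  · have := hgood.1 i h; have := hibal.2 _ h.le hilt; omega
  · have := hibal.1 _ h; have := hgood.2 i h.le hi; omega

end CycleLemma

lemma IsForestWord.eq_zero_of_isForestWord_rotate {k i : ℕ} {w : List Bool}
    (hw : IsForestWord k 1 w) (hi : i < w.length) (hrot : IsForestWord k 1 (w.rotate i)) :
    i = 0 :=
  (existsUnique_isForestWord_rotate (by simpa using hw.1)).unique ⟨hi, hrot⟩
    ⟨by omega, by simpa using hw⟩

lemma card_treeWords_mul_eq_choose (k n : ℕ) :
    Nat.card {w : List Bool // IsForestWord k 1 w ∧ w.count true = n} * (k * n + 1) =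
      (k * n + 1).choose n := by
  set L := k * n + 1
  have hlen : ∀ {w}, IsForestWord k 1 w → w.count true = n → w.length = L := fun hw hc => by
    rw [hw.length_eq, hc]
  let f : {w : List Bool // IsForestWord k 1 w ∧ w.count true = n} × Fin L →
      {w : List Bool // w.length = L ∧ w.count true = n} := fun p =>
    ⟨p.1.1.rotate p.2, by rw [List.length_rotate, hlen p.1.2.1 p.1.2.2],
      by rw [(List.rotate_perm _ _).count_eq, p.1.2.2]⟩
  have hf : Function.Bijective f := by
    refine ⟨fun ⟨⟨w, hw, hc⟩, c⟩ ⟨⟨w', hw', hc'⟩, c'⟩ h => ?_,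
      fun ⟨x, hx, hc⟩ => ?_⟩
    · replace h : w.rotate c = w'.rotate c' := congrArg Subtype.val h
      have hw'eq : w' = w.rotate (c - c' : Fin L) := calc
        w' = (w'.rotate c').rotate (L - c') := by
          rw [List.rotate_rotate, Nat.add_sub_cancel' c'.is_le', ← hlen hw' hc',
            List.rotate_length]
        _ = w.rotate (c - c' : Fin L) := by
          rw [← h, List.rotate_rotate, ← List.rotate_mod, Fin.val_sub, hlen hw hc, add_comm]
      have hcc : c = c' := sub_eq_zero.1 <| Fin.ext <|
        hw.eq_zero_of_isForestWord_rotate (by rw [hlen hw hc]; exact (c - c').is_lt)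
          (hw'eq ▸ hw')
      subst hcc
      simp [hw'eq]
    · have hheight : wordHeight k x = -1 := by
        simp only [wordHeight, hx, hc, L]; push_cast; ring
      obtain ⟨i, ⟨hi, hrot⟩, -⟩ := existsUnique_isForestWord_rotate hheight
      refine ⟨⟨⟨x.rotate i, hrot, by rw [(List.rotate_perm _ _).count_eq, hc]⟩,
        ⟨(L - i) % L, Nat.mod_lt _ (by omega)⟩⟩, Subtype.ext ?_⟩
      change (x.rotate i).rotate ((L - i) % L) = x
      rw [← hx, ← List.length_rotate x i, List.rotate_mod, List.length_rotate,
        List.rotate_rotate, Nat.add_sub_cancel' hi.le, List.rotate_length]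
  rw [← card_boolLists_eq_choose, ← Nat.card_congr (Equiv.ofBijective f hf), Nat.card_prod,
    Nat.card_eq_fintype_card (α := Fin L), Fintype.card_fin]

namespace KT

variable {k : ℕ}

def preorderCode : KT k → List Bool
  | .nil => [false]
  | .node _ c => true :: (List.ofFn fun i => (c i).preorderCode).flatten

def preorderLabels : KT k → List ℕ
  | .nil => []
  | .node a c => a :: (List.ofFn fun i => (c i).preorderLabels).flatten

lemma isForestWord_preorderCode (T : KT k) : IsForestWord k 1 T.preorderCode := by
  induction T with
  | nil => simp [preorderCode, IsForestWord]
  | node a c ih =>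
    rw [preorderCode, isForestWord_one_cons_true]
    have := isForestWord_flatten (k := k) (ls := List.ofFn fun i => (c i).preorderCode)
      fun u hu => by obtain ⟨i, rfl⟩ := List.mem_ofFn.1 hu; exact ih i
    rwa [List.length_ofFn] at this

lemma count_preorderCode (T : KT k) : T.preorderCode.count true = T.preorderLabels.length := by
  induction T with
  | nil => simp [preorderCode, preorderLabels]
  | node a c ih => simp [preorderCode, preorderLabels, List.count_flatten, List.sum_ofFn, ih]

lemma coe_preorderLabels (T : KT k) : (T.preorderLabels : Multiset ℕ) = T.labels := by
  induction T with
  | nil => rfl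
  | node a c ih =>
    rw [preorderLabels, labels, ← Multiset.cons_coe, ← Multiset.coe_join, Multiset.join,
      Multiset.sum_coe, List.map_ofFn, List.sum_ofFn]
    simp only [Function.comp_apply, ih]

lemma preorder_injective :
    Function.Injective fun T : KT k => (T.preorderCode, T.preorderLabels) := by
  intro T
  induction T with
  | nil => rintro (_ | ⟨a, c⟩) h <;> simp_all [preorderCode]
  | node a c ih =>
    rintro (_ | ⟨a', c'⟩) h
    · simp [preorderCode] at h
    simp only [preorderCode, preorderLabels, Prod.mk.injEq, List.cons.injEq, true_and] at h
    obtain ⟨hcode, rfl, hlab⟩ := h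
    have hcodes : ∀ i, (c i).preorderCode = (c' i).preorderCode :=
      congrFun <| List.ofFn_inj.1 <| eq_of_flatten_eq_of_isForestWord (k := k) (by simp)
        (by simp [List.mem_ofFn, isForestWord_preorderCode])
        (by simp [List.mem_ofFn, isForestWord_preorderCode]) hcode
    have hlabs : ∀ i, (c i).preorderLabels = (c' i).preorderLabels := by
      refine congrFun <| List.ofFn_inj.1 (List.eq_iff_flatten_eq.2 ⟨hlab, ?_⟩)
      simp only [List.map_ofFn, Function.comp_def, ← count_preorderCode, hcodes]
    congr
    funext i
    exact ih i (Prod.ext (hcodes i) (hlabs i))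

theorem exists_forest_of_isForestWord {m : ℕ} {w : List Bool} {l : List ℕ}
    (hw : IsForestWord k m w) (hl : l.length = w.count true) :
    ∃ ts : List (KT k), ts.length = m ∧ (ts.map preorderCode).flatten = w ∧
      (ts.map preorderLabels).flatten = l := by
  induction hN : w.length using Nat.strong_induction_on generalizing m w l with
  | _ N ih =>
  obtain _ | m := m
  · obtain rfl := isForestWord_zero_iff.1 hw
    exact ⟨[], rfl, rfl, (List.length_eq_zero_iff.1 (by simpa using hl)).symm⟩
  obtain ⟨u, v, rfl, hu, hv⟩ := hw.exists_append
  obtain ⟨l₁, l₂, rfl, hl₁, hl₂⟩ : ∃ l₁ l₂, l = l₁ ++ l₂ ∧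
      l₁.length = u.count true ∧ l₂.length = v.count true :=
    ⟨l.take (u.count true), l.drop (u.count true), (List.take_append_drop _ _).symm,
      by simp [List.count_append] at hl ⊢; omega, by simp [List.count_append] at hl ⊢; omega⟩
  have hu₀ : 0 < u.length := List.length_pos_iff.2 fun h => by simp [h, IsForestWord] at hu
  obtain ⟨ts, hts, hvcode, hvlab⟩ := ih v.length (by simp at hN; omega) hv hl₂ rfl
  obtain ⟨T, hTcode, hTlab⟩ : ∃ T : KT k, T.preorderCode = u ∧ T.preorderLabels = l₁ := by
    obtain _ | ⟨_ | _, u'⟩ := u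
    · simp at hu₀
    · obtain rfl := isForestWord_one_cons_false.1 hu
      exact ⟨nil, rfl, (List.length_eq_zero_iff.1 (by simpa using hl₁)).symm⟩
    · obtain _ | ⟨a, l₁'⟩ := l₁
      · simp at hl₁
      obtain ⟨cs, hcs, hcode, hlab⟩ :=
        ih u'.length (by simp at hN; omega) (isForestWord_one_cons_true.1 hu) (l := l₁')
          (by simpa using hl₁) rfl
      obtain ⟨c, rfl⟩ := List.exists_ofFn_eq hcs
      exact ⟨node a c, by simpa [preorderCode, List.map_ofFn, Function.comp_def] using hcode,
        by simpa [preorderLabels, List.map_ofFn, Function.comp_def] using hlab⟩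
  exact ⟨T :: ts, by simp [hts], by simp [hTcode, hvcode], by simp [hTlab, hvlab]⟩

end KT

open Nat in
lemma card_KTn_eq_mul_factorial (k n : ℕ) :
    Nat.card (KTn k n) =
      Nat.card {w : List Bool // IsForestWord k 1 w ∧ w.count true = n} * n ! := by
  have hlen : ∀ {l : List ℕ}, (l : Multiset ℕ) = (Finset.Icc 1 n).val → l.length = n :=
    fun h => by simpa using congrArg Multiset.card h
  let f : KTn k n → {w : List Bool // IsForestWord k 1 w ∧ w.count true = n} ×
      {l : List ℕ // (l : Multiset ℕ) = (Finset.Icc 1 n).val} := fun T =>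
    (⟨T.1.preorderCode, T.1.isForestWord_preorderCode, by
      rw [KT.count_preorderCode, hlen (T.1.coe_preorderLabels.trans T.2)]⟩,
     ⟨T.1.preorderLabels, T.1.coe_preorderLabels.trans T.2⟩)
  have hf : Function.Bijective f := by
    refine ⟨fun T T' h => Subtype.ext (KT.preorder_injective ?_),
      fun ⟨⟨w, hw, hc⟩, ⟨l, hl⟩⟩ => ?_⟩
    · simp only [f, Prod.mk.injEq, Subtype.mk.injEq] at h
      exact Prod.ext h.1 h.2
    · obtain ⟨_ | ⟨T, _ | _⟩, hts, hcode, hlab⟩ :=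
        KT.exists_forest_of_isForestWord hw (l := l) (by rw [hlen hl, hc])
      all_goals simp at hts
      simp only [List.map_cons, List.map_nil, List.flatten_cons, List.flatten_nil,
        List.append_nil] at hcode hlab
      subst hcode hlab
      exact ⟨⟨T, T.coe_preorderLabels.symm.trans hl⟩, rfl⟩
  rw [Nat.card_congr (Equiv.ofBijective f hf), Nat.card_prod, Finset.card_lists_coe_eq_val,
    Nat.card_Icc, Nat.add_sub_cancel]

open Nat in
lemma card_KTn_mul_eq_factorial_mul_choose (k n : ℕ) :
    Nat.card (KTn k n) * (k * n + 1) = n ! * (k * n + 1).choose n := by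
  rw [card_KTn_eq_mul_factorial, mul_right_comm, card_treeWords_mul_eq_choose, mul_comm]

lemma card_KTn_eq_descFactorial (k : ℕ) {n : ℕ} (hn : 0 < n) :
    Nat.card (KTn k n) = (k * n).descFactorial (n - 1) := by
  have h := card_KTn_mul_eq_factorial_mul_choose k n
  rw [← Nat.descFactorial_eq_factorial_mul_choose, ← Nat.sub_add_cancel hn,
    Nat.succ_descFactorial_succ, Nat.sub_add_cancel hn, mul_comm] at h
  exact Nat.eq_of_mul_eq_mul_left (Nat.succ_pos _) h

/-- The number of `k`-ary trees on `[n]` equals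
`n! · (1/((k−1)n+1)) · binom(kn, n) = kn·(kn−1)⋯(kn−n+2)`. -/
theorem card_karyTrees (k n : ℕ) (hk : 2 ≤ k) (hn : 0 < n) :
    (Nat.card (KTn k n) : ℚ) =
        n.factorial * (1 / (((k : ℚ) - 1) * n + 1)) * ((k * n).choose n) ∧
      (Nat.card (KTn k n) : ℚ) = ∏ i ∈ Finset.range (n - 1), ((k * n : ℚ) - i) := by
  have hkn : n ≤ k * n := Nat.le_mul_of_pos_left n (by omega)
  rw [card_KTn_eq_descFactorial k hn]
  constructor
  · have hfac : n.factorial * (k * n).choose n =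
        (k * n - (n - 1)) * (k * n).descFactorial (n - 1) := by
      rw [← Nat.descFactorial_eq_factorial_mul_choose, ← Nat.descFactorial_succ,
        Nat.sub_add_cancel hn]
    have hq : ((k * n - (n - 1) : ℕ) : ℚ) = ((k : ℚ) - 1) * n + 1 := by
      push_cast [Nat.cast_sub (show n - 1 ≤ k * n by omega), Nat.cast_sub hn]; ring
    have hq₀ : ((k : ℚ) - 1) * n + 1 ≠ 0 := by
      rw [← hq, Nat.cast_ne_zero]; omega
    replace hfac := congrArg (Nat.cast : ℕ → ℚ) hfac
    rw [Nat.cast_mul, Nat.cast_mul, hq] at hfac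
    rw [mul_one_div, div_mul_eq_mul_div, hfac, mul_div_cancel_left₀ _ hq₀]
  · rw [Nat.descFactorial_eq_prod_range, Nat.cast_prod]
    refine Finset.prod_congr rfl fun i hi => ?_
    rw [Finset.mem_range] at hi
    push_cast [Nat.cast_sub (show i ≤ k * n by omega)]
    ring
end

section
/- Fix an integer k ≥ 2 and a parameter t. Let a_n(t) = Σ_{T ∈ 𝒜^k_n} t^{pv(T)} (with a_0(t) = 1) and let A(x) = Σ_{n≥0} a_n(t) x^n / n! be its exponential generating function, as a formal power series. Then A satisfies the differential equation A' = k·x·A^{k−1}·A' + t·A^k with A(0) = 1, where A' denotes the derivative with respect to x. -/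
/-- `a_n(t) = Σ_{T ∈ 𝒜ᵏ_n} t^{pv(T)}` (so `a_0(t) = 1`). -/
noncomputable def aPoly (k n : ℕ) (t : ℚ) : ℚ := ∑ᶠ T : KTn k n, t ^ T.1.pv

/-!
Deleting the root of a tree on a label set `S` leaves a `k`-tuple of trees on the blocks of an
ordered decomposition of `S` minus the root, and the root is proper exactly when it is `min S`.
So the `n + 1` choices of the root contribute `t` once and `1` otherwise, while the `k`-tuples
of trees on an `n`-element set are counted by `n! [xⁿ] Aᵏ` once we know, by induction on the
size, that the enumerator of trees on any `m`-element set equals `a_m`. Hence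
`a_{n+1} = (t + n) n! [xⁿ] Aᵏ`, which on coefficients is
`A' = t Aᵏ + x (Aᵏ)' = t Aᵏ + k x Aᵏ⁻¹ A'`.
-/

open Finset PowerSeries
open scoped Nat

section Splits

theorem Multiset.le_of_sum_eq {α : Type*} {k : ℕ} {u : Multiset α} {p : Fin k → Multiset α}
    (hp : ∑ i, p i = u) (i : Fin k) : p i ≤ u :=
  hp ▸ Finset.single_le_sum (fun _ _ => zero_le _) (mem_univ i)

variable {α : Type*} [DecidableEq α]

def Multiset.splits (k : ℕ) (u : Multiset α) : Finset (Fin k → Multiset α) :=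
  (Fintype.piFinset fun _ => u.powerset.toFinset).filter fun p => ∑ i, p i = u

theorem Multiset.mem_splits {k : ℕ} {u : Multiset α} {p : Fin k → Multiset α} :
    p ∈ u.splits k ↔ ∑ i, p i = u := by
  simp only [splits, Finset.mem_filter, Fintype.mem_piFinset, mem_toFinset, mem_powerset,
    and_iff_right_iff_imp]
  exact le_of_sum_eq

theorem Multiset.sum_splits_succ {β : Type*} [AddCommMonoid β] (k : ℕ) (u : Multiset α)
    (F : (Fin (k + 1) → Multiset α) → β) :
    ∑ p ∈ u.splits (k + 1), F p =
      ∑ X ∈ u.powerset.toFinset, ∑ q ∈ (u - X).splits k, F (Fin.cons X q) := by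
  rw [sum_sigma']
  refine sum_nbij' (fun p => ⟨p 0, Fin.tail p⟩) (fun x => Fin.cons x.1 x.2) ?_ ?_
    (fun p _ => Fin.cons_self_tail p) (fun _ _ => by simp) (fun p _ => by simp)
  · intro p hp
    have hsum := mem_splits.1 hp
    rw [Fin.sum_univ_succ] at hsum
    rw [Finset.mem_sigma, mem_toFinset, mem_powerset, mem_splits]
    exact ⟨hsum ▸ Multiset.le_add_right _ _, eq_tsub_of_add_eq ((add_comm _ _).trans hsum)⟩
  · rintro ⟨X, q⟩ hx
    rw [Finset.mem_sigma, mem_toFinset, mem_powerset, mem_splits] at hx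
    simp only [mem_splits, Fin.sum_univ_succ, Fin.cons_zero, Fin.cons_succ, hx.2]
    exact add_tsub_cancel_of_le hx.1

theorem Multiset.sum_powerset_toFinset_apply_card {β : Type*} [AddCommMonoid β]
    {u : Multiset α} (hu : u.Nodup) (g : ℕ → β) :
    ∑ X ∈ u.powerset.toFinset, g (card X) =
      ∑ m ∈ Finset.range (card u + 1), (card u).choose m • g m := by
  have hpow : u.powerset.toFinset =
      (Finset.powerset ⟨u, hu⟩).map ⟨Finset.val, val_injective⟩ := by
    ext X
    simp only [mem_toFinset, mem_powerset, Finset.mem_map, Finset.mem_powerset,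
      Function.Embedding.coeFn_mk]
    refine ⟨fun h => ⟨⟨X, nodup_of_le h hu⟩, Finset.val_le_iff.1 h, rfl⟩, ?_⟩
    rintro ⟨Y, hY, rfl⟩
    exact Finset.val_le_iff.2 hY
  rw [hpow, sum_map]
  exact Finset.sum_powerset_apply_card (fun m => g m) (x := ⟨u, hu⟩)

end Splits

theorem Multiset.forall_mem_erase_le_iff {α : Type*} [DecidableEq α] [Preorder α]
    {s : Multiset α} {a : α} (ha : a ∈ s) :
    (∀ b ∈ s.erase a, a ≤ b) ↔ ∀ b ∈ s, a ≤ b := by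
  refine ⟨fun h b hb => ?_, fun h b hb => h b (mem_of_mem_erase hb)⟩
  rcases eq_or_ne b a with rfl | hba
  · exact le_rfl
  · exact h b ((mem_erase_of_ne hba).2 hb)

theorem Finset.sum_ite_forall_le {α R : Type*} [LinearOrder α] [Ring R] {S : Finset α}
    (hS : S.Nonempty) (t : R) :
    ∑ a ∈ S, (if ∀ b ∈ S, a ≤ b then t else 1) = t + #S - 1 := by
  have hmin : ∀ a ∈ S, (∀ b ∈ S, a ≤ b) ↔ a = S.min' hS := fun a ha =>
    ⟨fun h => le_antisymm (h _ (S.min'_mem hS)) (S.min'_le a ha),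
      fun h b hb => h ▸ S.min'_le b hb⟩
  rw [sum_congr rfl fun a ha => if_congr (hmin a ha) rfl rfl,
    ← add_sum_erase _ _ (S.min'_mem hS), if_pos rfl,
    sum_congr rfl fun a ha => if_neg (ne_of_mem_erase ha), sum_const,
    card_erase_of_mem (S.min'_mem hS), nsmul_one, Nat.cast_pred (card_pos.2 hS), add_sub_assoc]

theorem coeff_X_mul_derivative {R : Type*} [CommSemiring R] (F : R⟦X⟧) (n : ℕ) :
    coeff n (X * d⁄dX R F) = n * coeff n F := by
  cases n with
  | zero => simp
  | succ n => rw [coeff_succ_X_mul, coeff_derivative, mul_comm, Nat.cast_succ]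

section EGF

variable {K : Type*} [Field K]

noncomputable def egf (c : ℕ → K) : K⟦X⟧ := PowerSeries.mk fun n => c n / n !

theorem coeff_egf (c : ℕ → K) (n : ℕ) : coeff n (egf c) = c n / n ! := coeff_mk _ _

theorem factorial_mul_coeff_egf_mul [CharZero K] (c : ℕ → K) (F : K⟦X⟧) (n : ℕ) :
    n ! * coeff n (egf c * F) =
      ∑ m ∈ range (n + 1), n.choose m * (c m * ((n - m)! * coeff (n - m) F)) := by
  rw [coeff_mul, Nat.sum_antidiagonal_eq_sum_range_succ_mk, mul_sum]
  refine sum_congr rfl fun m hm => ?_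
  have hfact : (n ! : K) = n.choose m * m ! * (n - m)! := by
    have hmn : m ≤ n := Nat.lt_succ_iff.1 (mem_range.1 hm)
    exact_mod_cast (Nat.choose_mul_factorial_mul_factorial hmn).symm
  have hm : (m ! : K) ≠ 0 := Nat.cast_ne_zero.2 m.factorial_ne_zero
  rw [coeff_egf, hfact]
  field_simp

theorem derivative_egf [CharZero K] (c : ℕ → K) :
    d⁄dX K (egf c) = egf fun n => c (n + 1) := by
  ext n
  rw [coeff_derivative, coeff_egf, coeff_egf, Nat.factorial_succ]
  push_cast
  field_simp

theorem sum_splits_prod_card_eq_coeff_egf_pow [CharZero K] {α : Type*} [DecidableEq α]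
    (c : ℕ → K) (j : ℕ) {u : Multiset α} (hu : u.Nodup) :
    ∑ p ∈ u.splits j, ∏ i, c (Multiset.card (p i)) =
      (Multiset.card u)! * coeff (Multiset.card u) (egf c ^ j) := by
  induction j generalizing u with
  | zero =>
    by_cases hu0 : u = 0
    · subst hu0
      simp [Multiset.splits]
    · have hcard : Multiset.card u ≠ 0 := by simpa using hu0
      simp [Multiset.splits, Ne.symm hu0, hcard]
  | succ j ih =>
    rw [Multiset.sum_splits_succ, pow_succ', factorial_mul_coeff_egf_mul]
    simp only [Fin.prod_univ_succ, Fin.cons_zero, Fin.cons_succ, ← mul_sum]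
    rw [sum_congr rfl fun X hX => by
      rw [ih (Multiset.nodup_of_le (Multiset.sub_le_self _ _) hu),
        Multiset.card_sub (Multiset.mem_powerset.1 (Multiset.mem_toFinset.1 hX))]]
    rw [Multiset.sum_powerset_toFinset_apply_card hu
      (fun m => c m * ((Multiset.card u - m)! * coeff (Multiset.card u - m) (egf c ^ j)))]
    simp only [nsmul_eq_mul]

end EGF

namespace KT

variable {k : ℕ}

theorem mem_labels_node {a b : ℕ} {c : Fin k → KT k} :
    b ∈ (node a c).labels ↔ b = a ∨ ∃ i, b ∈ (c i).labels := by
  simp [labels, Multiset.mem_sum]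

theorem labels_eq_zero {T : KT k} : T.labels = 0 ↔ T = nil := by
  cases T <;> simp [labels]

theorem pow_pv_node (t : ℚ) (a : ℕ) (c : Fin k → KT k) :
    t ^ (node a c).pv =
      (if ∀ b ∈ ∑ i : Fin k, (c i).labels, a ≤ b then t else 1) * ∏ i, t ^ (c i).pv := by
  have hroot :
      (∀ b ∈ ∑ i : Fin k, (c i).labels, a ≤ b) ↔ ∀ i, ∀ b ∈ (c i).labels, a ≤ b := by
    simp only [Multiset.mem_sum, mem_univ, true_and]
    exact ⟨fun h i b hb => h b ⟨i, hb⟩, fun h b ⟨i, hb⟩ => h i b hb⟩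
  rw [pv, pow_add, prod_pow_eq_pow_sum, if_congr hroot rfl rfl]
  split_ifs <;> simp

open Classical in
noncomputable def boundedTrees (k : ℕ) (L : Finset ℕ) : ℕ → Finset (KT k)
  | 0 => {nil}
  | n + 1 => insert nil ((L ×ˢ Fintype.piFinset fun _ => boundedTrees k L n).image
      fun x => node x.1 x.2)

theorem mem_boundedTrees {L : Finset ℕ} (T : KT k) :
    ∀ {n : ℕ}, (∀ a ∈ T.labels, a ∈ L) → Multiset.card T.labels ≤ n →
      T ∈ boundedTrees k L n := by
  induction T with
  | nil => rintro (_ | _) _ _ <;> simp [boundedTrees]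
  | node a c ih =>
    classical
    rintro (_ | n) hL hcard
    · simp [labels] at hcard
    have hchild : ∀ i, Multiset.card (c i).labels ≤ n := fun i => by
      have := Multiset.card_le_card (Multiset.le_of_sum_eq (p := fun i => (c i).labels) rfl i)
      simp only [labels, Multiset.card_cons] at hcard
      omega
    rw [boundedTrees, mem_insert, mem_image]
    refine Or.inr ⟨(a, c), mem_product.2 ⟨hL a (mem_labels_node.2 (Or.inl rfl)), ?_⟩, rfl⟩
    exact Fintype.mem_piFinset.2 fun i =>
      ih i (fun b hb => hL b (mem_labels_node.2 (Or.inr ⟨i, hb⟩))) (hchild i)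

noncomputable def withLabels (k : ℕ) (s : Multiset ℕ) : Finset (KT k) :=
  (boundedTrees k s.toFinset (Multiset.card s)).filter (·.labels = s)

theorem mem_withLabels {s : Multiset ℕ} {T : KT k} : T ∈ withLabels k s ↔ T.labels = s := by
  refine ⟨fun h => (mem_filter.1 h).2, fun h => mem_filter.2 ⟨?_, h⟩⟩
  exact mem_boundedTrees T (fun a ha => Multiset.mem_toFinset.2 (h ▸ ha))
    (congrArg Multiset.card h).le

noncomputable def pvSum (k : ℕ) (s : Multiset ℕ) (t : ℚ) : ℚ :=
  ∑ T ∈ withLabels k s, t ^ T.pv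

theorem pvSum_zero (k : ℕ) (t : ℚ) : pvSum k 0 t = 1 := by
  have : withLabels k 0 = {nil} := by
    ext T
    rw [mem_withLabels, mem_singleton, labels_eq_zero]
  simp [pvSum, this, pv]

theorem aPoly_eq_pvSum (k n : ℕ) (t : ℚ) : aPoly k n t = pvSum k (Icc 1 n).val t := by
  let _ : Fintype (KTn k n) := Fintype.subtype (withLabels k _) fun _ => mem_withLabels
  rw [aPoly, finsum_eq_sum_of_fintype, pvSum]
  exact (sum_subtype _ (fun _ => mem_withLabels) fun T => t ^ T.pv).symm

noncomputable def rootDecompositions (k : ℕ) (s : Multiset ℕ) :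
    Finset (Σ _ : ℕ, Σ _ : Fin k → Multiset ℕ, Fin k → KT k) :=
  s.toFinset.sigma fun a => ((s.erase a).splits k).sigma fun p =>
    Fintype.piFinset fun i => withLabels k (p i)

theorem mem_rootDecompositions {s : Multiset ℕ} {a : ℕ} {p : Fin k → Multiset ℕ}
    {c : Fin k → KT k} :
    ⟨a, p, c⟩ ∈ rootDecompositions k s ↔
      a ∈ s ∧ ∑ i, (c i).labels = s.erase a ∧ p = fun i => (c i).labels := by
  simp only [rootDecompositions, mem_sigma, Multiset.mem_toFinset, Multiset.mem_splits,
    Fintype.mem_piFinset, mem_withLabels]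
  constructor
  · rintro ⟨ha, hp, hc⟩
    exact ⟨ha, by simpa only [hc] using hp, funext fun i => (hc i).symm⟩
  · rintro ⟨ha, hc, rfl⟩
    exact ⟨ha, hc, fun _ => rfl⟩

theorem pvSum_eq_sum_root {s : Multiset ℕ} (hs : s ≠ 0) (t : ℚ) :
    pvSum k s t = ∑ a ∈ s.toFinset, (if ∀ b ∈ s, a ≤ b then t else 1) *
      ∑ p ∈ (s.erase a).splits k, ∏ i, pvSum k (p i) t := by
  simp only [pvSum, prod_univ_sum, mul_sum, sum_sigma']
  symm
  refine sum_bij (s := rootDecompositions k s) (fun x _ => node x.1 x.2.2) ?_ ?_ ?_ ?_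
  · rintro ⟨a, p, c⟩ hx
    obtain ⟨ha, hc, -⟩ := mem_rootDecompositions.1 hx
    rw [mem_withLabels, labels, hc, Multiset.cons_erase ha]
  · rintro ⟨a, p, c⟩ hx ⟨a', p', c'⟩ hx' h
    obtain ⟨-, -, rfl⟩ := mem_rootDecompositions.1 hx
    obtain ⟨-, -, rfl⟩ := mem_rootDecompositions.1 hx'
    cases h
    rfl
  · intro T hT
    rw [mem_withLabels] at hT
    cases T with
    | nil => exact absurd hT.symm hs
    | node a c =>
      refine ⟨⟨a, fun i => (c i).labels, c⟩,
        mem_rootDecompositions.2 ⟨?_, ?_, rfl⟩, rfl⟩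
      · exact hT ▸ Multiset.mem_cons_self _ _
      · rw [← hT, labels, Multiset.erase_cons_head]
  · rintro ⟨a, p, c⟩ hx
    obtain ⟨ha, hc, -⟩ := mem_rootDecompositions.1 hx
    rw [pow_pv_node, hc, if_congr (Multiset.forall_mem_erase_le_iff ha) rfl rfl]

theorem pvSum_of_card_eq_succ {s : Multiset ℕ} (hs : s.Nodup) {n : ℕ}
    (hcard : Multiset.card s = n + 1) (t : ℚ)
    (ih : ∀ u : Multiset ℕ, u.Nodup → Multiset.card u ≤ n →
      pvSum k u t = aPoly k (Multiset.card u) t) :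
    pvSum k s t = (t + n) * (n ! * coeff n (egf (aPoly k · t) ^ k)) := by
  have hs0 : s ≠ 0 := by
    rintro rfl
    simp at hcard
  have hsplit : ∀ a ∈ s.toFinset, ∑ p ∈ (s.erase a).splits k, ∏ i, pvSum k (p i) t =
      n ! * coeff n (egf (aPoly k · t) ^ k) := by
    intro a ha
    have hnd : (s.erase a).Nodup := hs.erase a
    have hcard' : Multiset.card (s.erase a) = n := by
      rw [Multiset.card_erase_of_mem (Multiset.mem_toFinset.1 ha), hcard]
      rfl
    rw [← hcard', ← sum_splits_prod_card_eq_coeff_egf_pow _ _ hnd]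
    refine sum_congr rfl fun p hp => prod_congr rfl fun i _ => ?_
    have hle : p i ≤ s.erase a := Multiset.le_of_sum_eq (Multiset.mem_splits.1 hp) i
    exact ih _ (Multiset.nodup_of_le hle hnd) (hcard' ▸ Multiset.card_le_card hle)
  have hweight : ∑ a ∈ s.toFinset, (if ∀ b ∈ s, a ≤ b then t else 1) = t + n := by
    have := sum_ite_forall_le (Multiset.toFinset_nonempty.2 hs0) t
    simp only [Multiset.mem_toFinset, Multiset.toFinset_card_of_nodup hs, hcard] at this
    rw [this]
    push_cast
    ring
  rw [pvSum_eq_sum_root hs0, sum_congr rfl fun a ha => by rw [hsplit a ha], ← sum_mul, hweight]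

theorem pvSum_eq_aPoly_card {s : Multiset ℕ} (hs : s.Nodup) (t : ℚ) :
    pvSum k s t = aPoly k (Multiset.card s) t := by
  induction hn : Multiset.card s using Nat.strong_induction_on generalizing s with
  | _ n ih =>
  cases n with
  | zero => rw [Multiset.card_eq_zero.1 hn, aPoly_eq_pvSum]; rfl
  | succ n =>
    have ih' : ∀ u : Multiset ℕ, u.Nodup → Multiset.card u ≤ n →
        pvSum k u t = aPoly k (Multiset.card u) t :=
      fun u hu hle => ih _ (Nat.lt_succ_of_le hle) hu rfl
    rw [pvSum_of_card_eq_succ hs hn t ih', aPoly_eq_pvSum,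
      pvSum_of_card_eq_succ (Icc 1 (n + 1)).nodup (by simp) t ih']

end KT

theorem aPoly_zero (k : ℕ) (t : ℚ) : aPoly k 0 t = 1 :=
  (KT.aPoly_eq_pvSum k 0 t).trans (KT.pvSum_zero k t)

theorem aPoly_succ (k n : ℕ) (t : ℚ) :
    aPoly k (n + 1) t = (t + n) * (n ! * coeff n (egf (aPoly k · t) ^ k)) := by
  rw [KT.aPoly_eq_pvSum]
  exact KT.pvSum_of_card_eq_succ (Icc 1 (n + 1)).nodup (by simp) t
    fun _ hu _ => KT.pvSum_eq_aPoly_card hu t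

theorem kary_ODE_general (k : ℕ) (t : ℚ) :
    PowerSeries.constantCoeff (PowerSeries.mk fun n => aPoly k n t / n.factorial) = 1 ∧
      PowerSeries.derivative ℚ (PowerSeries.mk fun n => aPoly k n t / n.factorial) =
        PowerSeries.C (k : ℚ) * PowerSeries.X *
              (PowerSeries.mk fun n => aPoly k n t / n.factorial) ^ (k - 1) *
              PowerSeries.derivative ℚ (PowerSeries.mk fun n => aPoly k n t / n.factorial) +
          PowerSeries.C t * (PowerSeries.mk fun n => aPoly k n t / n.factorial) ^ k := by
  rw [show (PowerSeries.mk fun n => aPoly k n t / n.factorial) = egf (aPoly k · t) from rfl]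
  set A := egf (aPoly k · t)
  refine ⟨by simp [A, egf, aPoly_zero], ?_⟩
  have hchain : C (k : ℚ) * X * A ^ (k - 1) * d⁄dX ℚ A = X * d⁄dX ℚ (A ^ k) := by
    rw [Derivation.leibniz_pow, smul_eq_mul, nsmul_eq_mul, map_natCast]
    ring
  ext n
  rw [hchain, derivative_egf, coeff_egf, map_add, coeff_X_mul_derivative, coeff_C_mul,
    aPoly_succ]
  field_simp
  ring

/-- For `k ≥ 2`, the exponential generating function `A(x) = Σ_{n≥0} a_n(t) xⁿ/n!` of
the proper-vertex enumerator of `k`-ary trees satisfies the differential equation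
`A' = k·x·A^(k−1)·A' + t·A^k` with `A(0) = 1`. -/
theorem kary_ODE (k : ℕ) (hk : 2 ≤ k) (t : ℚ) :
    PowerSeries.constantCoeff (PowerSeries.mk fun n => aPoly k n t / n.factorial) = 1 ∧
      PowerSeries.derivative ℚ (PowerSeries.mk fun n => aPoly k n t / n.factorial) =
        PowerSeries.C (k : ℚ) * PowerSeries.X *
              (PowerSeries.mk fun n => aPoly k n t / n.factorial) ^ (k - 1) *
              PowerSeries.derivative ℚ (PowerSeries.mk fun n => aPoly k n t / n.factorial) +
          PowerSeries.C t * (PowerSeries.mk fun n => aPoly k n t / n.factorial) ^ k :=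
  kary_ODE_general k t
end

section
/- For every n ≥ 1, Σ_{T ∈ ℬ_n} 2^{pv(T)} = 2^n · (n+1)^{n−1}; equivalently, the evaluation at t = 2 of the polynomial t·Π_{i=1}^{n−1}((i+1)t + 2(n−i)) equals 2^n·(n+1)^{n−1}, where ℬ_n is the set of binary trees on [n]. -/
/-!
Splitting a binary tree at its root, the root label `a ∈ s` is a proper vertex exactly when
`a = min s`, and the remaining labels are shared out between the two subtrees. Hence
`W m = Σ 2^pv` over the binary trees on an `m`-element label set satisfies
`W (m + 1) = (m + 2) Σ_k C(m, k) W k W (m - k)`. Abel's binomial identity for the polynomials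
`x (x + k)^(k - 1)`, proved by differentiating in `x`, shows that `2^m (m + 1)^(m - 1)` satisfies
the same recurrence.
-/

open Polynomial Finset

section Abel

variable {R : Type*} [CommRing R]

noncomputable def abelPoly : ℕ → R[X]
  | 0 => 1
  | n + 1 => X * (X + C ((n : R) + 1)) ^ n

@[simp]
lemma abelPoly_zero : (abelPoly 0 : R[X]) = 1 := rfl

lemma eval_abelPoly_succ (n : ℕ) (x : R) : (abelPoly (n + 1)).eval x = x * (x + n + 1) ^ n := by
  simp [abelPoly, add_assoc]

lemma abelPoly_eval_zero (n : ℕ) : (abelPoly n : R[X]).eval 0 = if n = 0 then 1 else 0 := by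
  cases n <;> simp [abelPoly]

lemma eval_one_abelPoly (n : ℕ) : (abelPoly n : R[X]).eval 1 = ((n : R) + 1) ^ (n - 1) := by
  cases n <;> simp [eval_abelPoly_succ, add_comm (1 : R)]

lemma derivative_abelPoly_succ (n : ℕ) :
    derivative (abelPoly (n + 1) : R[X]) = C ((n : R) + 1) * (abelPoly n).comp (X + 1) := by
  cases n with
  | zero => simp [abelPoly]
  | succ m =>
    simp only [abelPoly, derivative_mul, derivative_pow, derivative_X, derivative_add,
      derivative_C, mul_comp, X_comp, pow_comp, add_comp, C_comp]
    push_cast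
    simp only [C_add, C_1, map_natCast]
    ring

lemma eq_of_derivative_eq_of_eval_zero_eq [IsAddTorsionFree R] {p q : R[X]}
    (hd : derivative p = derivative q) (h0 : p.eval 0 = q.eval 0) : p = q := by
  have hc := eq_C_of_derivative_eq_zero (p := p - q) (by rw [derivative_sub, hd, sub_self])
  rwa [coeff_zero_eq_eval_zero, eval_sub, h0, sub_self, map_zero, sub_eq_zero] at hc

theorem abelPoly_comp_X_add_C [IsAddTorsionFree R] (n : ℕ) (y : R) :
    (abelPoly n).comp (X + C y) =
      ∑ p ∈ antidiagonal n, C ((n.choose p.1 : R) * (abelPoly p.2).eval y) * abelPoly p.1 := by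
  induction n generalizing y with
  | zero => simp [abelPoly]
  | succ n ih =>
    apply eq_of_derivative_eq_of_eval_zero_eq
    · have hchoose (i : ℕ) :
          ((n + 1).choose (i + 1) : R) * ((i : R) + 1) = (n + 1) * n.choose i := by
        exact_mod_cast congrArg (Nat.cast : ℕ → R) (Nat.add_one_mul_choose_eq n i).symm
      calc derivative ((abelPoly (n + 1)).comp (X + C y))
          = C ((n : R) + 1) * ((abelPoly n).comp (X + C y)).comp (X + 1) := by
            rw [derivative_comp, derivative_abelPoly_succ]
            simp [comp_assoc, add_comp, add_assoc, add_comm (1 : R[X])]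
        _ = _ := by
            rw [ih, derivative_sum, Nat.sum_antidiagonal_succ, Polynomial.sum_comp, mul_sum]
            simp only [abelPoly_zero, mul_one, derivative_C, zero_add, derivative_C_mul,
              derivative_abelPoly_succ, mul_comp, C_comp]
            refine sum_congr rfl fun p _ => ?_
            rw [← mul_assoc, ← mul_assoc, ← C_mul, ← C_mul, mul_right_comm _ (eval y _), hchoose,
              mul_assoc]
    · simp [eval_finsetSum, abelPoly_eval_zero, Nat.sum_antidiagonal_succ]

theorem sum_antidiagonal_choose_mul_succ_pow [IsAddTorsionFree R] (n : ℕ) :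
    ∑ p ∈ antidiagonal n, (n.choose p.1 : R) *
        (((p.1 : R) + 1) ^ (p.1 - 1) * ((p.2 : R) + 1) ^ (p.2 - 1)) =
      (abelPoly n).eval 2 := by
  have h := congrArg (eval 1) (abelPoly_comp_X_add_C (R := R) n 1)
  rw [eval_comp, eval_add, eval_X, eval_C, one_add_one_eq_two, eval_finsetSum] at h
  rw [h]
  refine sum_congr rfl fun p _ => ?_
  simp only [eval_mul, eval_C, eval_one_abelPoly]
  ring

end Abel

def weightedTreeCount (m : ℕ) : ℚ := 2 ^ m * (m + 1) ^ (m - 1)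

lemma weightedTreeCount_succ (m : ℕ) :
    weightedTreeCount (m + 1) =
      (m + 2) * ∑ k ∈ range (m + 1),
        m.choose k • (weightedTreeCount k * weightedTreeCount (m - k)) := by
  have hsum : ∑ k ∈ range (m + 1), m.choose k • (weightedTreeCount k * weightedTreeCount (m - k))
      = 2 ^ m * (abelPoly m).eval 2 := by
    rw [← sum_antidiagonal_choose_mul_succ_pow, Nat.sum_antidiagonal_eq_sum_range_succ
      (fun i j => (m.choose i : ℚ) * (((i : ℚ) + 1) ^ (i - 1) * ((j : ℚ) + 1) ^ (j - 1))), mul_sum]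
    refine sum_congr rfl fun k hk => ?_
    have h2 : (2 : ℚ) ^ m = 2 ^ k * 2 ^ (m - k) := by
      rw [← pow_add, Nat.add_sub_cancel' (Nat.lt_succ_iff.mp (mem_range.mp hk))]
    simp only [weightedTreeCount, nsmul_eq_mul, h2]
    ring
  rw [hsum]
  cases m with
  | zero => norm_num [weightedTreeCount]
  | succ m =>
    simp only [weightedTreeCount, eval_abelPoly_succ]
    push_cast
    ring

lemma Finset.forall_mem_erase_le_iff_eq_min' {α : Type*} [LinearOrder α] {s : Finset α}
    (hs : s.Nonempty) {a : α} (ha : a ∈ s) : (∀ b ∈ s.erase a, a ≤ b) ↔ a = s.min' hs := by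
  rw [eq_comm, min'_eq_iff]
  refine ⟨fun h => ⟨ha, fun b hb => ?_⟩, fun h b hb => h.2 b (mem_of_mem_erase hb)⟩
  rcases eq_or_ne b a with rfl | hba
  exacts [le_rfl, h b (mem_erase.mpr ⟨hba, hb⟩)]

lemma Finset.exists_subset_val_eq_of_add_eq {α : Type*} [DecidableEq α] {s : Finset α}
    {p q : Multiset α} (h : p + q = s.val) : ∃ u ⊆ s, u.val = p ∧ (s \ u).val = q := by
  have hp : p ≤ s.val := h ▸ Multiset.le_add_right p q
  refine ⟨⟨p, Multiset.nodup_of_le hp s.nodup⟩, val_le_iff.mp hp, rfl, ?_⟩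
  change s.val - p = q
  rw [← h, add_tsub_cancel_left]

namespace KT

lemma eq_nil_or_eq_node (T : KT 2) : T = nil ∨ ∃ a l r, T = node a ![l, r] := by
  rcases T with _ | ⟨a, c⟩
  · exact .inl rfl
  · refine .inr ⟨a, c 0, c 1, congrArg (node a) (funext fun i => ?_)⟩
    fin_cases i <;> rfl

lemma node_inj {a a' : ℕ} {l r l' r' : KT 2} :
    node a ![l, r] = node a' ![l', r'] ↔ a = a' ∧ l = l' ∧ r = r' := by
  simp [Matrix.vecCons_inj]

@[simp]
lemma labels_nil {k : ℕ} : (nil : KT k).labels = 0 := rfl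

@[simp]
lemma pv_nil {k : ℕ} : (nil : KT k).pv = 0 := rfl

lemma labels_node (a : ℕ) (l r : KT 2) :
    (node a ![l, r]).labels = a ::ₘ (l.labels + r.labels) := by
  simp [labels, Fin.sum_univ_two]

lemma labels_eq_zero_iff {T : KT 2} : T.labels = 0 ↔ T = nil := by
  rcases T.eq_nil_or_eq_node with rfl | ⟨a, l, r, rfl⟩ <;> simp [labels_node]

lemma pow_pv_node_s13 {M : Type*} [CommMonoid M] (t : M) (a : ℕ) (l r : KT 2) :
    t ^ (node a ![l, r]).pv =
      (if ∀ b ∈ l.labels + r.labels, a ≤ b then t else 1) * (t ^ l.pv * t ^ r.pv) := by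
  simp only [pv, Fin.sum_univ_two, Fin.forall_fin_two, Matrix.cons_val_zero, Matrix.cons_val_one,
    Multiset.mem_add, or_imp, forall_and, pow_add]
  split_ifs <;> simp

end KT

open KT

open scoped Classical in
noncomputable def graft (a : ℕ) (L R : Finset (KT 2)) : Finset (KT 2) :=
  (L ×ˢ R).image fun p => node a ![p.1, p.2]

lemma mem_graft {a : ℕ} {L R : Finset (KT 2)} {T : KT 2} :
    T ∈ graft a L R ↔ ∃ l ∈ L, ∃ r ∈ R, node a ![l, r] = T := by
  simp [graft, and_assoc]

lemma sum_graft {M : Type*} [AddCommMonoid M] (f : KT 2 → M) (a : ℕ) (L R : Finset (KT 2)) :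
    ∑ T ∈ graft a L R, f T = ∑ l ∈ L, ∑ r ∈ R, f (node a ![l, r]) := by
  classical
  rw [graft, sum_image fun p _ q _ h => ?_, sum_product]
  obtain ⟨-, h1, h2⟩ := node_inj.mp h
  exact Prod.ext h1 h2

lemma disjoint_graft_of_ne {a a' : ℕ} (h : a ≠ a') (L R L' R' : Finset (KT 2)) :
    Disjoint (graft a L R) (graft a' L' R') := by
  simp only [disjoint_left, mem_graft]
  rintro _ ⟨l, -, r, -, rfl⟩ ⟨l', -, r', -, he⟩
  exact h (node_inj.mp he).1.symm

lemma disjoint_graft_of_disjoint {L L' : Finset (KT 2)} (h : Disjoint L L') (a : ℕ)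
    (R R' : Finset (KT 2)) : Disjoint (graft a L R) (graft a L' R') := by
  simp only [disjoint_left, mem_graft]
  rintro _ ⟨l, hl, r, -, rfl⟩ ⟨l', hl', r', -, he⟩
  exact disjoint_left.mp h hl ((node_inj.mp he).2.1 ▸ hl')

open scoped Classical in
/-- The binary trees with label set `s`, provided `s.card ≤ n`: the fuel `n` only bounds the
recursion depth. -/
noncomputable def trees : ℕ → Finset ℕ → Finset (KT 2)
  | 0, s => if s = ∅ then {nil} else ∅
  | n + 1, s =>
    if s = ∅ then {nil} else
      s.biUnion fun a => (s.erase a).powerset.biUnion fun u =>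
        graft a (trees n u) (trees n (s.erase a \ u))

lemma labels_of_mem_trees {n : ℕ} {s : Finset ℕ} {T : KT 2} (hT : T ∈ trees n s) :
    T.labels = s.val := by
  induction n generalizing s T with
  | zero =>
    simp only [trees] at hT
    split_ifs at hT with hs <;> simp_all
  | succ n ih =>
    simp only [trees] at hT
    split_ifs at hT with hs
    · simp_all
    simp only [mem_biUnion, mem_powerset, mem_graft] at hT
    obtain ⟨a, ha, u, hu, l, hl, r, hr, rfl⟩ := hT
    rw [labels_node, ih hl, ih hr, sdiff_val, add_tsub_cancel_of_le (val_le_iff.mpr hu),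
      erase_val, Multiset.cons_erase (mem_val.mpr ha)]

lemma mem_trees_of_labels {n : ℕ} {s : Finset ℕ} (hn : s.card ≤ n) {T : KT 2}
    (hT : T.labels = s.val) : T ∈ trees n s := by
  induction n generalizing s T with
  | zero =>
    obtain rfl := card_eq_zero.mp (Nat.le_zero.mp hn)
    simpa [trees, labels_eq_zero_iff] using hT
  | succ n ih =>
    rcases T.eq_nil_or_eq_node with rfl | ⟨a, l, r, rfl⟩
    · obtain rfl : s = ∅ := val_eq_zero.mp hT.symm
      simp [trees]
    rw [labels_node] at hT
    have ha : a ∈ s := by simp [← mem_val, ← hT]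
    obtain ⟨u, hu, hl, hr⟩ := exists_subset_val_eq_of_add_eq (s := s.erase a)
      (by rw [erase_val, ← hT, Multiset.erase_cons_head])
    have hcard : (s.erase a).card ≤ n := by rw [card_erase_of_mem ha]; omega
    simp only [trees, if_neg (ne_empty_of_mem ha), mem_biUnion, mem_powerset, mem_graft]
    exact ⟨a, ha, u, hu, l, ih ((card_le_card hu).trans hcard) hl.symm, r,
      ih ((card_le_card sdiff_subset).trans hcard) hr.symm, rfl⟩

lemma mem_trees_iff {n : ℕ} {s : Finset ℕ} (hn : s.card ≤ n) {T : KT 2} :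
    T ∈ trees n s ↔ T.labels = s.val :=
  ⟨labels_of_mem_trees, mem_trees_of_labels hn⟩

lemma disjoint_trees {n : ℕ} {s s' : Finset ℕ} (h : s ≠ s') :
    Disjoint (trees n s) (trees n s') :=
  disjoint_left.mpr fun _ hT hT' =>
    h (val_inj.mp ((labels_of_mem_trees hT).symm.trans (labels_of_mem_trees hT')))

lemma sum_pow_pv_trees_succ {M : Type*} [CommSemiring M] (t : M) (n : ℕ) {s : Finset ℕ}
    (hs : s.Nonempty) :
    ∑ T ∈ trees (n + 1) s, t ^ T.pv =
      ∑ a ∈ s, (if a = s.min' hs then t else 1) * ∑ u ∈ (s.erase a).powerset,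
        (∑ l ∈ trees n u, t ^ l.pv) * ∑ r ∈ trees n (s.erase a \ u), t ^ r.pv := by
  classical
  rw [trees, if_neg hs.ne_empty, sum_biUnion fun a _ a' _ h => (disjoint_biUnion_left _ _ _).mpr
    fun _ _ => (disjoint_biUnion_right _ _ _).mpr fun _ _ => disjoint_graft_of_ne h _ _ _ _]
  refine sum_congr rfl fun a ha => ?_
  rw [sum_biUnion fun u _ u' _ h => disjoint_graft_of_disjoint (disjoint_trees h) _ _ _, mul_sum]
  refine sum_congr rfl fun u hu => ?_
  rw [sum_graft, sum_mul_sum, mul_sum]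
  refine sum_congr rfl fun l hl => ?_
  rw [mul_sum]
  refine sum_congr rfl fun r hr => ?_
  have hlr : l.labels + r.labels = (s.erase a).val := by
    rw [labels_of_mem_trees hl, labels_of_mem_trees hr, sdiff_val,
      add_tsub_cancel_of_le (val_le_iff.mpr (mem_powerset.mp hu))]
  rw [pow_pv_node_s13, hlr]
  simp only [mem_val, forall_mem_erase_le_iff_eq_min' hs ha]

lemma sum_two_pow_pv_trees {n : ℕ} {s : Finset ℕ} (hn : s.card ≤ n) :
    ∑ T ∈ trees n s, (2 : ℚ) ^ T.pv = weightedTreeCount s.card := by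
  induction n generalizing s with
  | zero =>
    obtain rfl := card_eq_zero.mp (Nat.le_zero.mp hn)
    simp [trees, weightedTreeCount]
  | succ n ih =>
    rcases s.eq_empty_or_nonempty with rfl | hs
    · simp [trees, weightedTreeCount]
    obtain ⟨m, hm⟩ : ∃ m, s.card = m + 1 := Nat.exists_eq_add_one.mpr hs.card_pos
    have hsplit (a : ℕ) (ha : a ∈ s) :
        ∑ u ∈ (s.erase a).powerset,
            (∑ l ∈ trees n u, (2 : ℚ) ^ l.pv) * ∑ r ∈ trees n (s.erase a \ u), (2 : ℚ) ^ r.pv =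
          ∑ k ∈ range (m + 1), m.choose k • (weightedTreeCount k * weightedTreeCount (m - k)) := by
      have hcard : (s.erase a).card = m := by rw [card_erase_of_mem ha, hm, Nat.add_sub_cancel]
      rw [← hcard, ← sum_powerset_apply_card]
      refine sum_congr rfl fun u hu => ?_
      have hu := mem_powerset.mp hu
      rw [ih ((card_le_card hu).trans (by omega)),
        ih ((card_le_card sdiff_subset).trans (by omega)), card_sdiff_of_subset hu]
    have hroot : ∑ a ∈ s, (if a = s.min' hs then (2 : ℚ) else 1) = m + 2 := by
      rw [← add_sum_erase _ _ (min'_mem s hs), if_pos rfl,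
        sum_congr rfl fun a ha => if_neg (ne_of_mem_erase ha), sum_const,
        card_erase_of_mem (min'_mem s hs), hm, Nat.add_sub_cancel, nsmul_one]
      ring
    rw [sum_pow_pv_trees_succ 2 n hs, sum_congr rfl fun a ha => by rw [hsplit a ha], ← sum_mul,
      hroot, hm, weightedTreeCount_succ]

lemma finsum_labels_eq_sum_trees {M : Type*} [AddCommMonoid M] (f : KT 2 → M) {n : ℕ}
    {s : Finset ℕ} (hn : s.card ≤ n) :
    ∑ᶠ T : {T : KT 2 // T.labels = s.val}, f T = ∑ T ∈ trees n s, f T := by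
  rw [finsum_subtype_eq_finsum_cond, ← finsum_mem_coe_finset]
  exact finsum_congr fun T => by simp only [mem_coe, mem_trees_iff hn]

/-- `ℬ_n = 𝒜²_n`, the binary trees on `[n]`. For `n ≥ 1`,
`Σ_{T ∈ ℬ_n} 2^{pv(T)} = 2^n (n+1)^(n−1)`; equivalently the evaluation at `t = 2` of
`t·Π_{i=1}^{n−1}((i+1)t + 2(n−i))` equals `2^n (n+1)^(n−1)`. -/
theorem binary_eval_two (n : ℕ) (hn : 1 ≤ n) :
    (∑ᶠ T : KTn 2 n, (2 : ℚ) ^ T.1.pv) = 2 ^ n * (n + 1) ^ (n - 1) ∧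
      (2 : ℚ) * ∏ i ∈ Finset.Icc 1 (n - 1),
          (((i : ℚ) + 1) * 2 + 2 * ((n - i : ℕ) : ℚ)) =
        2 ^ n * (n + 1) ^ (n - 1) := by
  constructor
  · have hcard := (Nat.card_Icc 1 n).le
    refine (finsum_labels_eq_sum_trees (fun T => (2 : ℚ) ^ T.pv) hcard).trans ?_
    rw [sum_two_pow_pv_trees hcard, Nat.card_Icc, Nat.add_sub_cancel, weightedTreeCount]
  · have hfactor (i : ℕ) (hi : i ∈ Icc 1 (n - 1)) :
        ((i : ℚ) + 1) * 2 + 2 * ((n - i : ℕ) : ℚ) = 2 * (n + 1) := by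
      rw [Nat.cast_sub (by grind)]
      ring
    rw [prod_congr rfl hfactor, prod_const, Nat.card_Icc, Nat.add_sub_cancel, mul_pow, ← mul_assoc,
      ← pow_succ', Nat.sub_add_cancel hn]
end

section
/- Fix a parameter t. Let p_n(t) = Σ_{P ∈ 𝒫ℱ_n} t^{pv(P)} (with p_0(t) = 1) and let P(x) = Σ_{n≥0} p_n(t) x^n / n! as a formal power series. Then P satisfies the differential equation P' = x·P^2·P' + t·P^3 with P(0) = 1. -/
/-!
Deleting the first root `a` of a plane forest on a label set `s` leaves two plane forests: the
children of `a`, on some `B ⊆ s \ {a}`, and the remaining trees, on `s \ ({a} ∪ B)`; the root is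
proper iff `a < min B`. The weight of forests on `s` depends only on `|s|`, and summing over the
position of `a` inside `S = {a} ∪ B`, where only `a = min S` gives a proper root, yields
`p_{n+1} = ∑_k C(n+1, k+1) (t + k) p_k p_{n-k}`, i.e. `P = 1 + T P` for the exponential
generating function `T` of single trees, with `T' = t P + x P'`. Differentiating `P = 1 + T P`
and eliminating `T` through `T P = P - 1` yields the differential equation.
-/

/-- Labeled plane trees: a root label together with a linearly ordered list of subtrees. -/
inductive PT : Type
  | node (label : ℕ) (children : List PT) : PT

/-- The multiset of labels of a plane tree. -/
def PT.labels : PT → Multiset ℕ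
  | .node a ch => a ::ₘ (ch.attach.map fun c => PT.labels c.1).sum
decreasing_by
  have := List.sizeOf_lt_of_mem c.2
  simp only [PT.node.sizeOf_spec]
  omega

/-- The number of *proper* vertices of a plane tree: a vertex is proper if its label is
the smallest label in its descendant subtree (including itself). -/
def PT.pv : PT → ℕ
  | .node a ch =>
      (if ∀ b ∈ (ch.map PT.labels).sum, a ≤ b then 1 else 0)
        + (ch.attach.map fun c => PT.pv c.1).sum
decreasing_by
  have := List.sizeOf_lt_of_mem c.2
  simp only [PT.node.sizeOf_spec]
  omega

/-- `𝒫ℱ_n`: plane forests on `[n]`, i.e. sequences of (nonempty) plane trees whose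
label sets are disjoint with union `[n] = {1,…,n}`. -/
def PF (n : ℕ) : Type :=
  {l : List PT // (l.map PT.labels).sum = (Finset.Icc 1 n).val}

/-- The number of proper vertices of a plane forest. -/
def pvPF (l : List PT) : ℕ := (l.map PT.pv).sum

/-- `p_n(t) = Σ_{P ∈ 𝒫ℱ_n} t^{pv(P)}` (so `p_0(t) = 1`). -/
noncomputable def pPoly (n : ℕ) (t : ℚ) : ℚ := ∑ᶠ F : PF n, t ^ pvPF F.1

namespace Finset

variable {α M : Type*} [DecidableEq α]

theorem sum_sum_powersetCard_erase [AddCommMonoid M] (s : Finset α) (k : ℕ)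
    (f : α → Finset α → M) :
    ∑ a ∈ s, ∑ B ∈ (s.erase a).powersetCard k, f a B =
      ∑ S ∈ s.powersetCard (k + 1), ∑ a ∈ S, f a (S.erase a) := by
  rw [sum_sigma', sum_sigma']
  have not_mem {a : α} {B : Finset α} (hB : B ⊆ s.erase a) : a ∉ B :=
    fun ha => (mem_erase.1 (hB ha)).1 rfl
  refine sum_bij' (fun p _ => ⟨insert p.1 p.2, p.1⟩) (fun q _ => ⟨q.2, q.1.erase q.2⟩)
    ?_ ?_ ?_ ?_ ?_
  · rintro ⟨a, B⟩ h
    simp only [mem_sigma, mem_powersetCard] at h ⊢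
    refine ⟨⟨insert_subset h.1 (h.2.1.trans (erase_subset a s)), ?_⟩, mem_insert_self a B⟩
    rw [card_insert_of_notMem (not_mem h.2.1), h.2.2]
  · rintro ⟨S, a⟩ h
    simp only [mem_sigma, mem_powersetCard] at h ⊢
    refine ⟨h.1.1 h.2, erase_subset_erase a h.1.1, ?_⟩
    rw [card_erase_of_mem h.2, h.1.2, Nat.add_sub_cancel]
  · rintro ⟨a, B⟩ h
    simp only [mem_sigma, mem_powersetCard] at h
    simp only [erase_insert (not_mem h.2.1)]
  · rintro ⟨S, a⟩ h
    simp only [mem_sigma] at h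
    simp only [insert_erase h.2]
  · rintro ⟨a, B⟩ h
    simp only [mem_sigma, mem_powersetCard] at h
    simp only [erase_insert (not_mem h.2.1)]

theorem sum_ite_forall_erase_le {α R : Type*} [LinearOrder α] [Semiring R] (S : Finset α)
    (hS : S.Nonempty) (t : R) :
    ∑ a ∈ S, (if ∀ b ∈ S.erase a, a ≤ b then t else 1) = t + (#S - 1 : ℕ) := by
  have hmin := S.min'_mem hS
  have h_others : ∀ a ∈ S.erase (S.min' hS), (if ∀ b ∈ S.erase a, a ≤ b then t else 1) = 1 := by
    intro a ha
    have hlt : S.min' hS < a :=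
      lt_of_le_of_ne (S.min'_le a (mem_of_mem_erase ha)) (ne_of_mem_erase ha).symm
    exact if_neg fun h => (h _ (mem_erase.2 ⟨hlt.ne, hmin⟩)).not_gt hlt
  rw [← add_sum_erase S _ hmin, sum_congr rfl h_others,
    if_pos fun b hb => S.min'_le b (mem_of_mem_erase hb), sum_const, card_erase_of_mem hmin,
    nsmul_one]

end Finset

namespace PT

theorem labels_node (a : ℕ) (ch : List PT) :
    (node a ch).labels = a ::ₘ (ch.map labels).sum := by
  rw [labels, List.attach_map_val (l := ch) (f := labels)]

theorem pv_node (a : ℕ) (ch : List PT) :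
    (node a ch).pv = (if ∀ b ∈ (ch.map labels).sum, a ≤ b then 1 else 0) + (ch.map pv).sum := by
  rw [pv, List.attach_map_val (l := ch) (f := pv)]

end PT

theorem pvPF_cons (a : ℕ) (ch rest : List PT) :
    pvPF (.node a ch :: rest) =
      (if ∀ b ∈ (ch.map PT.labels).sum, a ≤ b then 1 else 0) + pvPF ch + pvPF rest := by
  simp only [pvPF, List.map_cons, List.sum_cons, PT.pv_node]

open Finset

def forestSet (s : Finset ℕ) : Set (List PT) := {l | (l.map PT.labels).sum = s.val}

section forestSet

variable {s B B' : Finset ℕ} {l : List PT}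

theorem nil_mem_forestSet_iff : [] ∈ forestSet s ↔ s = ∅ := by
  simp [forestSet, eq_comm]

theorem eq_of_mem_forestSet (h : l ∈ forestSet B) (h' : l ∈ forestSet B') : B = B' :=
  val_inj.1 (h.symm.trans h')

theorem cons_mem_forestSet_iff {a : ℕ} {ch rest : List PT} :
    PT.node a ch :: rest ∈ forestSet s ↔
      a ∈ s ∧ ∃ B ⊆ s.erase a, ch ∈ forestSet B ∧ rest ∈ forestSet (s.erase a \ B) := by
  simp only [forestSet, Set.mem_ofPred_eq, List.map_cons, List.sum_cons, PT.labels_node]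
  constructor
  · intro h
    set L := (ch.map PT.labels).sum
    have ha : a ∈ s := by
      rw [← mem_val, ← h, Multiset.cons_add]
      exact Multiset.mem_cons_self a _
    have h_erase : (s.erase a).val = L + (rest.map PT.labels).sum := by
      rw [erase_val, ← h, Multiset.cons_add, Multiset.erase_cons_head]
    have hL : L ≤ (s.erase a).val := h_erase ▸ Multiset.le_add_right _ _
    have hL_val : L.toFinset.val = L := Multiset.toFinset_val L ▸
      Multiset.dedup_eq_self.2 (Multiset.nodup_of_le hL (s.erase a).nodup)
    refine ⟨ha, L.toFinset, val_le_iff.1 (by rwa [hL_val]), hL_val.symm, ?_⟩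
    rw [sdiff_val, h_erase, hL_val, add_tsub_cancel_left]
  · rintro ⟨ha, B, hB, hch, hrest⟩
    rw [hch, hrest, Multiset.cons_add, sdiff_val, add_tsub_cancel_of_le (val_le_iff.2 hB),
      erase_val, Multiset.cons_erase (mem_def.1 ha)]

theorem forestSet_finite (s : Finset ℕ) : (forestSet s).Finite := by
  induction s using Finset.strongInduction with
  | H s ih =>
    have h_pieces : ∀ a ∈ s, ∀ B ∈ (s.erase a).powerset,
        ((fun p : List PT × List PT => PT.node a p.1 :: p.2) ''
          (forestSet B ×ˢ forestSet (s.erase a \ B))).Finite := by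
      intro a ha B hB
      have hBs : B ⊂ s := (mem_powerset.1 hB).trans_ssubset (erase_ssubset ha)
      exact ((ih B hBs).prod (ih _ (sdiff_subset.trans_ssubset (erase_ssubset ha)))).image _
    refine ((Set.finite_singleton []).union <| s.finite_toSet.biUnion fun a ha =>
      (s.erase a).powerset.finite_toSet.biUnion fun B hB => h_pieces a ha B hB).subset ?_
    rintro (_ | ⟨⟨a, ch⟩, rest⟩) hl
    · exact Or.inl rfl
    · obtain ⟨ha, B, hB, hch, hrest⟩ := cons_mem_forestSet_iff.1 hl
      have hB' : B ∈ ((s.erase a).powerset : Set (Finset ℕ)) := mem_coe.2 (mem_powerset.2 hB)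
      exact Or.inr (Set.mem_biUnion ha (Set.mem_biUnion hB' ⟨(ch, rest), ⟨hch, hrest⟩, rfl⟩))

end forestSet

noncomputable def forests (s : Finset ℕ) : Finset (List PT) := (forestSet_finite s).toFinset

theorem mem_forests {s : Finset ℕ} {l : List PT} : l ∈ forests s ↔ l ∈ forestSet s :=
  Set.Finite.mem_toFinset _

section forestWeight

variable {R : Type*} [CommSemiring R] (t : R)

noncomputable def forestWeight (s : Finset ℕ) : R := ∑ l ∈ forests s, t ^ pvPF l

theorem pow_pvPF_cons {a : ℕ} {B : Finset ℕ} {ch : List PT} (hch : ch ∈ forestSet B)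
    (rest : List PT) :
    t ^ pvPF (.node a ch :: rest) =
      (if ∀ b ∈ B, a ≤ b then t else 1) * (t ^ pvPF ch * t ^ pvPF rest) := by
  rw [pvPF_cons, hch, pow_add, pow_add, mul_assoc]
  simp only [mem_val]
  split_ifs <;> simp

theorem forestWeight_eq_sum_first_tree {s : Finset ℕ} (hs : s.Nonempty) :
    forestWeight t s = ∑ a ∈ s, ∑ B ∈ (s.erase a).powerset,
      (if ∀ b ∈ B, a ≤ b then t else 1) * (forestWeight t B * forestWeight t (s.erase a \ B)) := by
  calc forestWeight t s
      = ∑ q ∈ (s.sigma fun a => (s.erase a).powerset).sigma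
            (fun q => forests q.2 ×ˢ forests (s.erase q.1 \ q.2)),
          t ^ pvPF (.node q.1.1 q.2.1 :: q.2.2) := by
        refine (sum_bij (fun q _ => .node q.1.1 q.2.1 :: q.2.2) ?_ ?_ ?_ fun _ _ => rfl).symm
        · rintro ⟨⟨a, B⟩, ch, rest⟩ hq
          simp only [mem_sigma, mem_powerset, mem_product, mem_forests] at hq
          exact mem_forests.2 (cons_mem_forestSet_iff.2 ⟨hq.1.1, B, hq.1.2, hq.2⟩)
        · rintro ⟨⟨a, B⟩, ch, rest⟩ hq ⟨⟨a', B'⟩, ch', rest'⟩ hq' h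
          simp only [mem_sigma, mem_product, mem_forests] at hq hq'
          simp only [List.cons.injEq, PT.node.injEq] at h
          obtain ⟨⟨rfl, rfl⟩, rfl⟩ := h
          obtain rfl := eq_of_mem_forestSet hq.2.1 hq'.2.1
          rfl
        · rintro (_ | ⟨⟨a, ch⟩, rest⟩) hl <;> rw [mem_forests] at hl
          · exact absurd (nil_mem_forestSet_iff.1 hl) hs.ne_empty
          · obtain ⟨ha, B, hB, hch, hrest⟩ := cons_mem_forestSet_iff.1 hl
            refine ⟨⟨⟨a, B⟩, ch, rest⟩, ?_, rfl⟩
            simp only [mem_sigma, mem_powerset, mem_product, mem_forests]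
            exact ⟨⟨ha, hB⟩, hch, hrest⟩
    _ = _ := by
        rw [sum_sigma, sum_sigma]
        refine sum_congr rfl fun a _ => sum_congr rfl fun B _ => ?_
        rw [forestWeight, forestWeight, sum_mul_sum, mul_sum, sum_product]
        refine sum_congr rfl fun ch hch => ?_
        rw [mul_sum]
        refine sum_congr rfl fun rest _ => ?_
        exact pow_pvPF_cons t (mem_forests.1 hch) rest

theorem forestWeight_eq_sum_of_card {n : ℕ} (G : ℕ → R)
    (hG : ∀ u : Finset ℕ, #u ≤ n → forestWeight t u = G #u) {s : Finset ℕ} (hs : #s = n + 1) :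
    forestWeight t s =
      ∑ k ∈ range (n + 1), ((n + 1).choose (k + 1) * (t + k)) * (G k * G (n - k)) := by
  have hs_ne : s.Nonempty := card_pos.1 (hs ▸ n.succ_pos)
  calc forestWeight t s
      = ∑ a ∈ s, ∑ k ∈ range (n + 1), ∑ B ∈ (s.erase a).powersetCard k,
          (if ∀ b ∈ B, a ≤ b then t else 1) * (G k * G (n - k)) := by
        rw [forestWeight_eq_sum_first_tree t hs_ne]
        refine sum_congr rfl fun a ha => ?_
        have h_erase : #(s.erase a) = n := by rw [card_erase_of_mem ha, hs, Nat.add_sub_cancel]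
        rw [sum_powerset, h_erase]
        refine sum_congr rfl fun k hk => sum_congr rfl fun B hB => ?_
        obtain ⟨hBs, hBk⟩ := mem_powersetCard.1 hB
        have h_rest : #(s.erase a \ B) = n - k := by rw [card_sdiff_of_subset hBs, h_erase, hBk]
        rw [hG B (hBk ▸ Nat.lt_succ_iff.1 (mem_range.1 hk)), hG _ (h_rest ▸ Nat.sub_le n k),
          hBk, h_rest]
    _ = ∑ k ∈ range (n + 1), (∑ S ∈ s.powersetCard (k + 1), ∑ a ∈ S,
          if ∀ b ∈ S.erase a, a ≤ b then t else 1) * (G k * G (n - k)) := by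
        rw [sum_comm]
        simp only [← sum_mul, sum_sum_powersetCard_erase]
    _ = _ := by
        refine sum_congr rfl fun k _ => ?_
        rw [sum_congr rfl fun S hS => ?_, sum_const, card_powersetCard, hs, nsmul_eq_mul]
        obtain ⟨-, hSk⟩ := mem_powersetCard.1 hS
        rw [sum_ite_forall_erase_le S (card_pos.1 (hSk ▸ k.succ_pos)) t, hSk, Nat.add_sub_cancel]

theorem forestWeight_congr_card {s s' : Finset ℕ} (h : #s = #s') :
    forestWeight t s = forestWeight t s' := by
  induction h' : #s using Nat.strong_induction_on generalizing s s' with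
  | _ n ih =>
    rcases n with _ | n
    · obtain rfl := card_eq_zero.1 h'
      obtain rfl := card_eq_zero.1 (h.symm.trans h')
      rfl
    · have hG (u : Finset ℕ) (hu : #u ≤ n) : forestWeight t u = forestWeight t (range #u) :=
        ih #u (Nat.lt_succ_of_le hu) (card_range _).symm rfl
      rw [forestWeight_eq_sum_of_card t (fun k => forestWeight t (range k)) hG h',
        forestWeight_eq_sum_of_card t (fun k => forestWeight t (range k)) hG (h.symm.trans h')]

end forestWeight

theorem pPoly_eq_forestWeight (n : ℕ) (t : ℚ) : pPoly n t = forestWeight t (Icc 1 n) :=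
  (finsum_subtype_eq_finsum_cond (f := fun l => t ^ pvPF l) (· ∈ forestSet (Icc 1 n))).trans
    (finsum_mem_eq_finite_toFinset_sum _ (forestSet_finite _))

theorem pPoly_zero (t : ℚ) : pPoly 0 t = 1 := by
  have h_forests : forests ∅ = {[]} := by
    ext l
    rw [mem_forests, mem_singleton]
    refine ⟨fun hl => ?_, fun hl => hl ▸ nil_mem_forestSet_iff.2 rfl⟩
    rcases l with _ | ⟨⟨a, ch⟩, rest⟩
    · rfl
    · exact absurd (cons_mem_forestSet_iff.1 hl).1 (notMem_empty a)
  rw [pPoly_eq_forestWeight, forestWeight, Icc_eq_empty_of_lt zero_lt_one, h_forests,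
    sum_singleton, pvPF, List.map_nil, List.sum_nil, pow_zero]

theorem pPoly_succ (n : ℕ) (t : ℚ) :
    pPoly (n + 1) t = ∑ k ∈ range (n + 1),
      ((n + 1).choose (k + 1) * (t + k)) * (pPoly k t * pPoly (n - k) t) := by
  have card_Icc_one (m : ℕ) : #(Icc 1 m) = m := by rw [Nat.card_Icc, Nat.add_sub_cancel]
  have hG (u : Finset ℕ) (_ : #u ≤ n) : forestWeight t u = pPoly #u t := by
    rw [pPoly_eq_forestWeight]
    exact forestWeight_congr_card t (card_Icc_one _).symm
  rw [pPoly_eq_forestWeight, forestWeight_eq_sum_of_card t (pPoly · t) hG (card_Icc_one _)]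

namespace PowerSeries

variable {R : Type*} [CommRing R]

theorem derivative_eq_of_eq_one_add_mul {P T : R⟦X⟧} {c : R} (hP : P = 1 + T * P)
    (hT : derivative R T = C c * P + X * derivative R P) :
    derivative R P = X * P ^ 2 * derivative R P + C c * P ^ 3 := by
  have hP' : derivative R P = derivative R T * P + T * derivative R P := by
    conv_lhs => rw [hP]
    rw [map_add, Derivation.map_one_eq_zero, zero_add, Derivation.leibniz, smul_eq_mul,
      smul_eq_mul, add_comm, mul_comm P]
  rw [hT] at hP'
  linear_combination P * hP' - derivative R P * hP

end PowerSeries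

open PowerSeries Nat

noncomputable def forestEGF (t : ℚ) : ℚ⟦X⟧ := PowerSeries.mk fun n => pPoly n t / n !

/-- The exponential generating function of single plane trees: on `k + 1` labels, the root
takes any label and is proper exactly when it takes the smallest one. -/
noncomputable def treeEGF (t : ℚ) : ℚ⟦X⟧ :=
  X * PowerSeries.mk fun k => (t + k) * pPoly k t / (k + 1)!

theorem forestEGF_eq_one_add_treeEGF_mul (t : ℚ) :
    forestEGF t = 1 + treeEGF t * forestEGF t := by
  ext (_ | n)
  · simp [forestEGF, treeEGF, pPoly_zero]
  rw [treeEGF, mul_assoc, map_add, coeff_succ_X_mul, coeff_mul,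
    Finset.Nat.sum_antidiagonal_eq_sum_range_succ_mk, coeff_one, if_neg n.succ_ne_zero, zero_add,
    forestEGF, coeff_mk, pPoly_succ, Finset.sum_div]
  refine Finset.sum_congr rfl fun k hk => ?_
  have hkn : k ≤ n := Nat.lt_succ_iff.1 (Finset.mem_range.1 hk)
  have h_choose : ((n + 1).choose (k + 1) : ℚ) * (k + 1)! * (n - k)! = (n + 1)! := by
    have := Nat.choose_mul_factorial_mul_factorial (Nat.succ_le_succ hkn)
    rw [Nat.succ_sub_succ] at this
    exact_mod_cast this
  rw [coeff_mk, coeff_mk]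
  field_simp
  linear_combination (t + k) * pPoly k t * pPoly (n - k) t * h_choose

theorem derivative_treeEGF (t : ℚ) :
    derivative ℚ (treeEGF t) = C t * forestEGF t + X * derivative ℚ (forestEGF t) := by
  ext (_ | n)
  · simp [treeEGF, forestEGF, pPoly_zero]
  rw [map_add, coeff_derivative, treeEGF, coeff_succ_X_mul, coeff_mk, coeff_C_mul, forestEGF,
    coeff_mk, coeff_succ_X_mul, coeff_derivative, coeff_mk, factorial_succ (n + 1),
    factorial_succ n]
  push_cast
  field_simp

/-- The exponential generating function `P(x) = Σ_{n ≥ 0} p_n(t) xⁿ/n!` of the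
proper-vertex enumerator of plane forests satisfies `P' = x·P²·P' + t·P³`, `P(0) = 1`. -/
theorem planeForest_ODE (t : ℚ) :
    PowerSeries.constantCoeff (PowerSeries.mk fun n => pPoly n t / n.factorial) = 1 ∧
      PowerSeries.derivative ℚ (PowerSeries.mk fun n => pPoly n t / n.factorial) =
        PowerSeries.X * (PowerSeries.mk fun n => pPoly n t / n.factorial) ^ 2 *
            PowerSeries.derivative ℚ (PowerSeries.mk fun n => pPoly n t / n.factorial) +
          PowerSeries.C t * (PowerSeries.mk fun n => pPoly n t / n.factorial) ^ 3 :=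
  ⟨by simp [pPoly_zero],
    derivative_eq_of_eq_one_add_mul (forestEGF_eq_one_add_treeEGF_mul t) (derivative_treeEGF t)⟩
end
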